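/- arXiv:1204.3523 — 3 statements merged into one kernel-verified Lean document; each statement's English description precedes it below -/
import Mathlib

section
/- Under the MWU misclassification dynamics, if the dynamics is c-bounded for some c ∈ (0,1), then the set S = {x ∈ D : |{t ∈ {1,…,T} : x ∈ M_t}| ≥ T/2} of points lying in at least half of the sets M_1, …, M_T satisfies |S| ≤ n · ((1 + cρ) / (1+ρ)^{1/2})^T. -/
/-!
Track the total weight `W_t = ∑_{x ∈ D} w_t(x)`. Round `t + 1` multiplies the weight of each point
of `M_{t+1}` by `1 + ρ`, so `W_{t+1} = W_t + ρ ∑_{x ∈ M_{t+1}} w_t(x) ≤ (1 + cρ) W_t`, whence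
`W_T ≤ n (1 + cρ)^T`. A point misclassified in at least `T/2` rounds has `w_T(x) ≥ (1 + ρ)^{T/2}`,
so counting these points against `W_T` gives the bound.
-/

open Finset

namespace MWU

variable {α : Type*} [DecidableEq α]

def missCount (M : ℕ → Finset α) (t : ℕ) (x : α) : ℕ := #{s ∈ Icc 1 t | x ∈ M s}

def weight (ρ : ℝ) (M : ℕ → Finset α) (t : ℕ) (x : α) : ℝ := (1 + ρ) ^ missCount M t x

variable {ρ : ℝ} {M : ℕ → Finset α} {t : ℕ} {x : α}

lemma missCount_zero : missCount M 0 x = 0 := by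
  simp [missCount]

lemma missCount_succ :
    missCount M (t + 1) x = missCount M t x + if x ∈ M (t + 1) then 1 else 0 := by
  rw [missCount, ← insert_Icc_right_eq_Icc_add_one (by omega), filter_insert]
  split_ifs <;> simp [missCount]

lemma weight_nonneg (hρ : 0 ≤ ρ) : 0 ≤ weight ρ M t x := by
  unfold weight; positivity

lemma weight_succ :
    weight ρ M (t + 1) x = weight ρ M t x + if x ∈ M (t + 1) then ρ * weight ρ M t x else 0 := by
  simp only [weight, missCount_succ]
  split_ifs <;> ring

lemma sum_weight_succ {D : Finset α} (hMD : M (t + 1) ⊆ D) :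
    ∑ x ∈ D, weight ρ M (t + 1) x =
      ∑ x ∈ D, weight ρ M t x + ρ * ∑ x ∈ M (t + 1), weight ρ M t x := by
  simp only [weight_succ, sum_add_distrib, sum_ite_mem, inter_eq_right.mpr hMD, mul_sum]

lemma sum_weight_le_card_mul_pow {D : Finset α} {c : ℝ} {T : ℕ} (hρ : 0 ≤ ρ) (hc : 0 ≤ c)
    (hMD : ∀ t, 1 ≤ t → t ≤ T → M t ⊆ D)
    (hbounded : ∀ t < T, ∑ x ∈ M (t + 1), weight ρ M t x ≤ c * ∑ x ∈ D, weight ρ M t x) :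
    ∀ t ≤ T, ∑ x ∈ D, weight ρ M t x ≤ #D * (1 + c * ρ) ^ t
  | 0, _ => by simp [weight, missCount_zero]
  | t + 1, ht => by
    have hW := sum_weight_le_card_mul_pow hρ hc hMD hbounded t (by omega)
    rw [sum_weight_succ (hMD (t + 1) (by omega) ht)]
    calc _ ≤ ∑ x ∈ D, weight ρ M t x + ρ * (c * ∑ x ∈ D, weight ρ M t x) := by
          gcongr; exact hbounded t ht
      _ = (1 + c * ρ) * ∑ x ∈ D, weight ρ M t x := by ring
      _ ≤ (1 + c * ρ) * (#D * (1 + c * ρ) ^ t) := by gcongr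
      _ = #D * (1 + c * ρ) ^ (t + 1) := by ring

lemma card_filter_nsmul_le_sum {ι R : Type*} [AddCommMonoid R] [PartialOrder R]
    [IsOrderedAddMonoid R] {s : Finset ι} {p : ι → Prop} [DecidablePred p] {f : ι → R} {b : R}
    (hf : ∀ i ∈ s, 0 ≤ f i) (hb : ∀ i ∈ s, p i → b ≤ f i) :
    #{i ∈ s | p i} • b ≤ ∑ i ∈ s, f i :=
  (card_nsmul_le_sum _ _ _ fun i hi ↦ (mem_filter.mp hi).elim (hb i)).trans <|
    sum_le_sum_of_subset_of_nonneg (filter_subset _ _) fun i hi _ ↦ hf i hi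

lemma rpow_half_pow_le_pow {a : ℝ} (ha : 1 ≤ a) {T k : ℕ} (hTk : T ≤ 2 * k) :
    (a ^ (1 / 2 : ℝ)) ^ T ≤ a ^ k := by
  rw [← Real.sqrt_eq_rpow]
  calc √a ^ T ≤ √a ^ (2 * k) := pow_le_pow_right₀ (Real.one_le_sqrt.mpr ha) hTk
    _ = a ^ k := by rw [pow_mul, Real.sq_sqrt (by linarith)]

end MWU

open MWU in
theorem mwu_majority_misclassified_bound_general {α : Type*} [DecidableEq α]
    (D : Finset α) (n : ℕ) (hn : D.card = n)
    (ρ : ℝ) (hρ : 0 < ρ)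
    (T : ℕ)
    (M : ℕ → Finset α) (hM : ∀ t, 1 ≤ t → t ≤ T → M t ⊆ D)
    (c : ℝ) (hc0 : 0 < c)
    (hbounded : ∀ t < T,
      ∑ x ∈ M (t + 1),
          (1 + ρ) ^ (((Finset.Icc 1 t).filter (fun s => x ∈ M s)).card)
        ≤ c * ∑ x ∈ D,
          (1 + ρ) ^ (((Finset.Icc 1 t).filter (fun s => x ∈ M s)).card)) :
    ((D.filter (fun x =>
        T ≤ 2 * ((Finset.Icc 1 T).filter (fun s => x ∈ M s)).card)).card : ℝ)
      ≤ (n : ℝ) * ((1 + c * ρ) / (1 + ρ) ^ ((1 : ℝ) / 2)) ^ T := by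
  have hρ' : 0 ≤ ρ := hρ.le
  have htotal := sum_weight_le_card_mul_pow hρ' hc0.le hM hbounded T le_rfl
  have hcount : #{x ∈ D | T ≤ 2 * missCount M T x} • ((1 + ρ) ^ ((1 : ℝ) / 2)) ^ T ≤
      ∑ x ∈ D, weight ρ M T x :=
    card_filter_nsmul_le_sum (fun _ _ ↦ weight_nonneg hρ')
      (fun _ _ hx ↦ rpow_half_pow_le_pow (by linarith) hx)
  rw [div_pow, ← mul_div_assoc, le_div_iff₀ (by positivity), ← hn]
  rw [nsmul_eq_mul] at hcount
  exact hcount.trans htotal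

/-- MWU misclassification dynamics: weights `w_t(x) = (1+ρ)^{|{s : 1 ≤ s ≤ t, x ∈ M s}|}`.
If the dynamics is `c`-bounded for some `c ∈ (0,1)`, then the set `S` of points lying
in at least half of the sets `M 1, …, M T` satisfies
`|S| ≤ n · ((1 + cρ) / (1+ρ)^{1/2})^T`, where `(1+ρ)^{1/2}` is the real power. -/
theorem mwu_majority_misclassified_bound {α : Type*} [DecidableEq α]
    (D : Finset α) (n : ℕ) (hn : D.card = n)
    (ρ : ℝ) (hρ : 0 < ρ)
    (T : ℕ) (hT : 0 < T)
    (M : ℕ → Finset α) (hM : ∀ t, 1 ≤ t → t ≤ T → M t ⊆ D)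
    (c : ℝ) (hc0 : 0 < c) (hc1 : c < 1)
    (hbounded : ∀ t < T,
      ∑ x ∈ M (t + 1),
          (1 + ρ) ^ (((Finset.Icc 1 t).filter (fun s => x ∈ M s)).card)
        ≤ c * ∑ x ∈ D,
          (1 + ρ) ^ (((Finset.Icc 1 t).filter (fun s => x ∈ M s)).card)) :
    ((D.filter (fun x =>
        T ≤ 2 * ((Finset.Icc 1 T).filter (fun s => x ∈ M s)).card)).card : ℝ)
      ≤ (n : ℝ) * ((1 + c * ρ) / (1 + ρ) ^ ((1 : ℝ) / 2)) ^ T :=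
  mwu_majority_misclassified_bound_general D n hn ρ hρ T M hM c hc0 hbounded
end

section
/- Let D be a finite set with |D| = n ≥ 1 of points labeled by y : D → Bool, and let h_1, …, h_T : D → Bool be classifiers, with T a positive natural number. For each t let M_t = {x ∈ D : h_t(x) ≠ y(x)}, and define weights w_t(x) = (7/4)^{|{s : 1 ≤ s ≤ t, x ∈ M_s}|} (i.e., the MWU misclassification dynamics with ρ = 3/4). Define the majority-vote classifier H : D → Bool by H(x) = true if and only if |{t : h_t(x) = true}| > T/2. Suppose 0 < ε < 1, T ≥ 5 · log₂(1/ε), and for every t with 0 ≤ t < T one has Σ_{x ∈ M_{t+1}} w_t(x) ≤ (1/5) · Σ_{x ∈ D} w_t(x). Then |{x ∈ D : H(x) ≠ y(x)}| < ε · n. -/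
/-!
The potential `Φ t = ∑ x ∈ D, (7/4) ^ (number of rounds s ≤ t with x ∈ M s)` starts at `n` and,
since the newly misclassified points carry at most a fifth of it, grows by a factor at most
`1 + (3/4)(1/5) = 23/20` per round. A point misclassified by the majority vote lies in `M t` for at
least `T/2` rounds, so it alone contributes at least `√(7/4) ^ T` to `Φ T`. Hence the number of
such points is at most `n (23/20 / √(7/4)) ^ T = n √(529/700) ^ T`, and `√(529/700) ^ 5 < 1/2`
turns `T ≥ 5 log₂ (1/ε)` into `√(529/700) ^ T < ε`.
-/

open Finset

section MistakeCount

variable {α : Type*} [DecidableEq α]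

def mistakeCount (M : ℕ → Finset α) (t : ℕ) (x : α) : ℕ := #{s ∈ Icc 1 t | x ∈ M s}

@[simp]
lemma mistakeCount_zero (M : ℕ → Finset α) (x : α) : mistakeCount M 0 x = 0 := by
  simp [mistakeCount]

lemma mistakeCount_succ (M : ℕ → Finset α) (t : ℕ) (x : α) :
    mistakeCount M (t + 1) x = mistakeCount M t x + if x ∈ M (t + 1) then 1 else 0 := by
  rw [mistakeCount, mistakeCount, ← insert_Icc_right_eq_Icc_add_one (by omega), filter_insert]
  split_ifs <;> simp

variable {R : Type*} [CommRing R] [LinearOrder R] [IsStrictOrderedRing R]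

omit [LinearOrder R] [IsStrictOrderedRing R] in
lemma sum_pow_mistakeCount_succ (β : R) {M : ℕ → Finset α} {D : Finset α} {t : ℕ}
    (hM : M (t + 1) ⊆ D) :
    ∑ x ∈ D, β ^ mistakeCount M (t + 1) x =
      ∑ x ∈ D, β ^ mistakeCount M t x + (β - 1) * ∑ x ∈ M (t + 1), β ^ mistakeCount M t x := by
  have hstep : ∀ x, β ^ mistakeCount M (t + 1) x =
      β ^ mistakeCount M t x + (β - 1) * if x ∈ M (t + 1) then β ^ mistakeCount M t x else 0 := by
    intro x
    rw [mistakeCount_succ]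
    split_ifs <;> ring
  rw [sum_congr rfl fun x _ => hstep x, sum_add_distrib, ← mul_sum, sum_ite_mem,
    inter_eq_right.mpr hM]

lemma sum_pow_mistakeCount_le {β γ : R} (hβ : 1 ≤ β) (hγ : 0 ≤ γ) {M : ℕ → Finset α}
    {D : Finset α} (hM : ∀ t, M t ⊆ D) {T : ℕ}
    (hround : ∀ t < T, ∑ x ∈ M (t + 1), β ^ mistakeCount M t x ≤
      γ * ∑ x ∈ D, β ^ mistakeCount M t x) :
    ∑ x ∈ D, β ^ mistakeCount M T x ≤ #D * (1 + (β - 1) * γ) ^ T := by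
  induction T with
  | zero => simp
  | succ t ih =>
    calc ∑ x ∈ D, β ^ mistakeCount M (t + 1) x
        = ∑ x ∈ D, β ^ mistakeCount M t x + (β - 1) * ∑ x ∈ M (t + 1), β ^ mistakeCount M t x :=
          sum_pow_mistakeCount_succ β (hM _)
      _ ≤ (1 + (β - 1) * γ) * ∑ x ∈ D, β ^ mistakeCount M t x := by
          nlinarith [mul_le_mul_of_nonneg_left (hround t t.lt_succ_self) (sub_nonneg.mpr hβ)]
      _ ≤ (1 + (β - 1) * γ) * (#D * (1 + (β - 1) * γ) ^ t) := by
          have : 0 ≤ β - 1 := sub_nonneg.mpr hβ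
          gcongr
          exact ih fun s hs => hround s (by omega)
      _ = #D * (1 + (β - 1) * γ) ^ (t + 1) := by ring

end MistakeCount

lemma card_mul_sqrt_pow_le_sum_pow {α : Type*} {β : ℝ} (hβ : 1 ≤ β) {B D : Finset α}
    (hBD : B ⊆ D) {f : α → ℕ} {T : ℕ} (hf : ∀ x ∈ B, T ≤ 2 * f x) :
    #B * √β ^ T ≤ ∑ x ∈ D, β ^ f x := by
  have hpoint : ∀ x ∈ B, √β ^ T ≤ β ^ f x := fun x hx =>
    calc √β ^ T ≤ √β ^ (2 * f x) := pow_le_pow_right₀ (Real.one_le_sqrt.mpr hβ) (hf x hx)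
      _ = β ^ f x := by rw [pow_mul, Real.sq_sqrt (by linarith)]
  calc (#B : ℝ) * √β ^ T = ∑ _x ∈ B, √β ^ T := by rw [sum_const, nsmul_eq_mul]
    _ ≤ ∑ x ∈ B, β ^ f x := sum_le_sum hpoint
    _ ≤ ∑ x ∈ D, β ^ f x := sum_le_sum_of_subset_of_nonneg hBD fun x _ _ => by positivity

lemma card_le_two_mul_card_filter_ne_of_majority {ι : Type*} (s : Finset ι) (v : ι → Bool)
    (b : Bool) (hmaj : #s < 2 * #{i ∈ s | v i = true} ↔ b = false) :
    #s ≤ 2 * #{i ∈ s | v i ≠ b} := by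
  have hsplit := card_filter_add_card_filter_not (s := s) (fun i => v i = true)
  cases b <;> simp_all <;> omega

lemma pow_lt_of_logb_le {q ε : ℝ} {k T : ℕ} (hq : 0 < q) (hqk : q ^ k < 1 / 2)
    (hε0 : 0 < ε) (hε1 : ε < 1) (hT : k * Real.logb 2 (1 / ε) ≤ T) : q ^ T < ε := by
  have hL : 0 < Real.logb 2 (1 / ε) := Real.logb_pos one_lt_two (one_lt_one_div hε0 hε1)
  have hlogq : k * Real.log q < -Real.log 2 := by
    rw [← Real.log_pow, ← Real.log_inv, ← one_div]
    exact Real.log_lt_log (by positivity) hqk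
  have hlogq_nonpos : Real.log q ≤ 0 := by
    refine Real.log_nonpos hq.le (not_lt.mp fun hq1 => ?_)
    linarith [one_le_pow₀ (n := k) hq1.le]
  rw [← Real.log_lt_log_iff (by positivity) hε0, Real.log_pow]
  have hlogε : Real.log ε = -(Real.logb 2 (1 / ε) * Real.log 2) := by
    rw [Real.logb, div_mul_cancel₀ _ (Real.log_pos one_lt_two).ne', one_div, Real.log_inv, neg_neg]
  calc T * Real.log q ≤ k * Real.logb 2 (1 / ε) * Real.log q :=
        mul_le_mul_of_nonpos_right hT hlogq_nonpos
    _ = Real.logb 2 (1 / ε) * (k * Real.log q) := by ring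
    _ < Real.logb 2 (1 / ε) * -Real.log 2 := mul_lt_mul_of_pos_left hlogq hL
    _ = Real.log ε := by rw [hlogε]; ring

theorem mwu_majority_vote_bound_general {α : Type*} [DecidableEq α]
    (D : Finset α) (n : ℕ) (hn : D.card = n) (hn1 : 1 ≤ n)
    (y : α → Bool)
    (T : ℕ)
    (h : ℕ → α → Bool)
    (M : ℕ → Finset α) (hMdef : ∀ t, M t = D.filter (fun x => h t x ≠ y x))
    (H : α → Bool)
    (hH : ∀ x, H x = true ↔
      T < 2 * ((Finset.Icc 1 T).filter (fun t => h t x = true)).card)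
    (ε : ℝ) (hε0 : 0 < ε) (hε1 : ε < 1)
    (hTε : (T : ℝ) ≥ 5 * Real.logb 2 (1 / ε))
    (hbounded : ∀ t < T,
      ∑ x ∈ M (t + 1),
          ((7/4 : ℝ)) ^ (((Finset.Icc 1 t).filter (fun s => x ∈ M s)).card)
        ≤ (1/5 : ℝ) * ∑ x ∈ D,
          ((7/4 : ℝ)) ^ (((Finset.Icc 1 t).filter (fun s => x ∈ M s)).card)) :
    ((D.filter (fun x => H x ≠ y x)).card : ℝ) < ε * n := by
  have hMD : ∀ t, M t ⊆ D := fun t => hMdef t ▸ filter_subset _ _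
  have hbad : ∀ x ∈ D.filter (fun x => H x ≠ y x), T ≤ 2 * mistakeCount M T x := by
    intro x hx
    obtain ⟨hxD, hHy⟩ := mem_filter.mp hx
    have hcount : mistakeCount M T x = #{t ∈ Icc 1 T | h t x ≠ y x} := by
      simp only [mistakeCount, hMdef, mem_filter, hxD, true_and]
    have hmaj : #(Icc 1 T) < 2 * #{t ∈ Icc 1 T | h t x = true} ↔ y x = false := by
      rw [Nat.card_Icc, Nat.add_sub_cancel, ← hH]
      revert hHy
      cases H x <;> cases y x <;> decide
    simpa [hcount] using card_le_two_mul_card_filter_ne_of_majority _ _ _ hmaj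
  have hrate : √(529 / 700) ^ T < ε := by
    refine pow_lt_of_logb_le (k := 5) (by positivity) ?_ hε0 hε1 (by exact_mod_cast hTε)
    refine lt_of_pow_lt_pow_left₀ 2 (by norm_num) ?_
    rw [← pow_mul, mul_comm, pow_mul, Real.sq_sqrt (by norm_num)]
    norm_num
  have hsplit : (1 + (7 / 4 - 1) * (1 / 5) : ℝ) = √(529 / 700) * √(7 / 4) := by
    rw [← Real.sqrt_mul (by norm_num), show (529 / 700 * (7 / 4) : ℝ) = (23 / 20) ^ 2 by norm_num,
      Real.sqrt_sq (by norm_num)]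
    norm_num
  refine lt_of_mul_lt_mul_right ?_ (by positivity : 0 ≤ √(7 / 4 : ℝ) ^ T)
  calc (#(D.filter fun x => H x ≠ y x) : ℝ) * √(7 / 4) ^ T
      ≤ ∑ x ∈ D, (7 / 4 : ℝ) ^ mistakeCount M T x :=
        card_mul_sqrt_pow_le_sum_pow (by norm_num) (filter_subset _ _) hbad
    _ ≤ #D * (1 + (7 / 4 - 1) * (1 / 5)) ^ T :=
        sum_pow_mistakeCount_le (by norm_num) (by norm_num) hMD hbounded
    _ = √(529 / 700) ^ T * n * √(7 / 4) ^ T := by rw [hsplit, mul_pow, hn]; ring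
    _ < ε * n * √(7 / 4) ^ T := by gcongr

/-- Theorem 4.2 of the paper in combinatorial form.  `D` is a finite set of `n ≥ 1`
points labeled by `y`, and `h 1, …, h T` are classifiers.  `M t` is the set of points
of `D` misclassified by `h t`, and the weights follow the MWU misclassification
dynamics with `ρ = 3/4` (base `7/4`).  `H` is the majority-vote classifier:
`H x = true` iff more than `T/2` of the classifiers output `true` on `x`.
If `0 < ε < 1`, `T ≥ 5 · log₂(1/ε)`, and in each round the misclassified points
carry at most a `1/5`-fraction of the current total weight, then the majority vote
misclassifies fewer than `ε · n` points. -/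
theorem mwu_majority_vote_bound {α : Type*} [DecidableEq α]
    (D : Finset α) (n : ℕ) (hn : D.card = n) (hn1 : 1 ≤ n)
    (y : α → Bool)
    (T : ℕ) (hT : 0 < T)
    (h : ℕ → α → Bool)
    (M : ℕ → Finset α) (hMdef : ∀ t, M t = D.filter (fun x => h t x ≠ y x))
    (H : α → Bool)
    (hH : ∀ x, H x = true ↔
      T < 2 * ((Finset.Icc 1 T).filter (fun t => h t x = true)).card)
    (ε : ℝ) (hε0 : 0 < ε) (hε1 : ε < 1)
    (hTε : (T : ℝ) ≥ 5 * Real.logb 2 (1 / ε))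
    (hbounded : ∀ t < T,
      ∑ x ∈ M (t + 1),
          ((7/4 : ℝ)) ^ (((Finset.Icc 1 t).filter (fun s => x ∈ M s)).card)
        ≤ (1/5 : ℝ) * ∑ x ∈ D,
          ((7/4 : ℝ)) ^ (((Finset.Icc 1 t).filter (fun s => x ∈ M s)).card)) :
    ((D.filter (fun x => H x ≠ y x)).card : ℝ) < ε * n :=
  mwu_majority_vote_bound_general D n hn hn1 y T h M hMdef H hH ε hε0 hε1 hTε hbounded
end

section
/- There exists an absolute constant C > 0 with the following property. Let n ≥ 2 and d ≥ 1 be natural numbers, let a_1, …, a_n ∈ ℝ^d, b ∈ ℝ^n, let ε be a real with 0 < ε ≤ 1, let ρ ≥ 1 be a real width parameter, and let T be a natural number with T ≥ C · ρ² · (ln n) / ε². Suppose x^{(1)}, …, x^{(T)} ∈ ℝ^d is a sequence of vectors such that: (i) |⟨a_i, x^{(t)}⟩ − b_i| ≤ ρ for all i ∈ {1,…,n} and t ∈ {1,…,T}; and (ii) for every t ∈ {1,…,T}, Σ_{i=1}^n p_i(t) · (⟨a_i, x^{(t)}⟩ − b_i) ≥ 0, where m_i(0) = 0, m_i(t) =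 m_i(t−1) + ⟨a_i, x^{(t)}⟩ − b_i, and p_i(t) = exp(−ε · m_i(t−1) / (2ρ²)). Then the average x̄ = (1/T) Σ_{t=1}^T x^{(t)} satisfies ⟨a_i, x̄⟩ ≥ b_i − ε for every i ∈ {1,…,n}. -/
/-!
Multiplicative weights, with potential `Φ t = ∑ i, exp (-η * m t i)` and `η = ε / (2ρ²)`.
Since `|η g| ≤ 1`, `exp (-η g) ≤ 1 - η g + η² g²`; the oracle's aggregated constraint
`∑ i, p i * g i ≥ 0` removes the linear term, so each round multiplies `Φ` by at most
`1 + η²ρ² ≤ exp (η²ρ²)`. Hence `exp (-η * m T i) ≤ Φ T ≤ n * exp (η²ρ²T)`, that is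
`-m T i ≤ log n / η + ηρ²T ≤ εT`, and `m T i / T` is exactly the slack `⟨a i, x̄⟩ - b i`.
-/

open Finset Real

theorem Real.exp_le_one_add_add_sq {z : ℝ} (hz : |z| ≤ 1) : exp z ≤ 1 + z + z ^ 2 := by
  linarith [(abs_le.mp (abs_exp_sub_one_sub_id_le hz)).2]

theorem eq_sum_range_of_succ {ι : Type*} {m g : ℕ → ι → ℝ} {T : ℕ} (hm0 : ∀ i, m 0 i = 0)
    (hm : ∀ t < T, ∀ i, m (t + 1) i = m t i + g t i) (i : ι) : m T i = ∑ t ∈ range T, g t i := by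
  induction T with
  | zero => simp [hm0]
  | succ T ih =>
    rw [hm T T.lt_succ_self, ih fun t ht => hm t (ht.trans T.lt_succ_self), sum_range_succ]

section MultiplicativeWeights

variable {ι : Type*} [Fintype ι] {η ρ : ℝ}

theorem sum_exp_sub_mul_le (hη : 0 ≤ η) (hηρ : η * ρ ≤ 1) {w g : ι → ℝ}
    (hg : ∀ i, |g i| ≤ ρ) (hwg : 0 ≤ ∑ i, exp (w i) * g i) :
    ∑ i, exp (w i - η * g i) ≤ (∑ i, exp (w i)) * exp (η ^ 2 * ρ ^ 2) := by
  have hterm : ∀ i, exp (w i - η * g i)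
      ≤ exp (w i) * (1 + η ^ 2 * ρ ^ 2) - η * (exp (w i) * g i) := by
    intro i
    have hsmall : |-(η * g i)| ≤ 1 := by
      rw [abs_neg, abs_mul, abs_of_nonneg hη]
      exact (mul_le_mul_of_nonneg_left (hg i) hη).trans hηρ
    have hsq : g i ^ 2 ≤ ρ ^ 2 := sq_le_sq' (abs_le.mp (hg i)).1 (abs_le.mp (hg i)).2
    calc exp (w i - η * g i) = exp (w i) * exp (-(η * g i)) := by rw [sub_eq_add_neg, exp_add]
      _ ≤ exp (w i) * (1 + -(η * g i) + (-(η * g i)) ^ 2) :=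
        mul_le_mul_of_nonneg_left (exp_le_one_add_add_sq hsmall) (exp_pos _).le
      _ ≤ exp (w i) * (1 + η ^ 2 * ρ ^ 2) - η * (exp (w i) * g i) := by
        have := mul_le_mul_of_nonneg_left hsq (mul_nonneg (sq_nonneg η) (exp_pos (w i)).le)
        nlinarith
  calc ∑ i, exp (w i - η * g i)
      ≤ ∑ i, (exp (w i) * (1 + η ^ 2 * ρ ^ 2) - η * (exp (w i) * g i)) :=
        sum_le_sum fun i _ => hterm i
    _ = (∑ i, exp (w i)) * (1 + η ^ 2 * ρ ^ 2) - η * ∑ i, exp (w i) * g i := by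
      rw [sum_sub_distrib, ← sum_mul, ← mul_sum]
    _ ≤ (∑ i, exp (w i)) * exp (η ^ 2 * ρ ^ 2) := by
      have := mul_le_mul_of_nonneg_left (add_one_le_exp (η ^ 2 * ρ ^ 2))
        (sum_nonneg fun i _ => (exp_pos (w i)).le : 0 ≤ ∑ i, exp (w i))
      nlinarith [mul_nonneg hη hwg]

variable {m g : ℕ → ι → ℝ} {T : ℕ}

theorem sum_exp_neg_mul_le_card_mul_exp (hη : 0 ≤ η) (hηρ : η * ρ ≤ 1) (hm0 : ∀ i, m 0 i = 0)
    (hm : ∀ t < T, ∀ i, m (t + 1) i = m t i + g t i) (hg : ∀ t < T, ∀ i, |g t i| ≤ ρ)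
    (hmg : ∀ t < T, 0 ≤ ∑ i, exp (-η * m t i) * g t i) :
    ∑ i, exp (-η * m T i) ≤ Fintype.card ι * exp (η ^ 2 * ρ ^ 2 * T) := by
  induction T with
  | zero => simp [hm0]
  | succ T ih =>
    have hstep : ∀ i, -η * m (T + 1) i = -η * m T i - η * g T i := fun i => by
      rw [hm T T.lt_succ_self i]; ring
    calc ∑ i, exp (-η * m (T + 1) i)
        ≤ (∑ i, exp (-η * m T i)) * exp (η ^ 2 * ρ ^ 2) := by
          simp only [hstep]
          exact sum_exp_sub_mul_le hη hηρ (hg T T.lt_succ_self) (hmg T T.lt_succ_self)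
      _ ≤ Fintype.card ι * exp (η ^ 2 * ρ ^ 2 * T) * exp (η ^ 2 * ρ ^ 2) :=
          mul_le_mul_of_nonneg_right
            (ih (fun t ht => hm t (ht.trans T.lt_succ_self))
              (fun t ht => hg t (ht.trans T.lt_succ_self))
              (fun t ht => hmg t (ht.trans T.lt_succ_self))) (exp_pos _).le
      _ = Fintype.card ι * exp (η ^ 2 * ρ ^ 2 * ↑(T + 1)) := by
          rw [mul_assoc, ← exp_add]; push_cast; ring_nf

theorem neg_le_log_card_div_add (hη : 0 < η) (hηρ : η * ρ ≤ 1) (hm0 : ∀ i, m 0 i = 0)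
    (hm : ∀ t < T, ∀ i, m (t + 1) i = m t i + g t i) (hg : ∀ t < T, ∀ i, |g t i| ≤ ρ)
    (hmg : ∀ t < T, 0 ≤ ∑ i, exp (-η * m t i) * g t i) (i : ι) :
    -m T i ≤ log (Fintype.card ι) / η + η * ρ ^ 2 * T := by
  have hcard : (0 : ℝ) < Fintype.card ι := Nat.cast_pos.mpr (Fintype.card_pos_iff.mpr ⟨i⟩)
  have hexp : exp (-η * m T i) ≤ exp (log (Fintype.card ι) + η ^ 2 * ρ ^ 2 * T) := by
    rw [exp_add, exp_log hcard]
    exact (single_le_sum (fun j _ => (exp_pos (-η * m T j)).le) (mem_univ i)).trans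
      (sum_exp_neg_mul_le_card_mul_exp hη.le hηρ hm0 hm hg hmg)
  rw [div_add' _ _ _ hη.ne', le_div_iff₀ hη]
  linarith [exp_le_exp.mp hexp]

end MultiplicativeWeights


theorem sum_mul_average_eq_add_div {κ : Type*} [Fintype κ] (a : κ → ℝ) (β : ℝ) (x : ℕ → κ → ℝ)
    {T : ℕ} (hT : T ≠ 0) :
    ∑ j, a j * ((1 / (T : ℝ)) * ∑ t ∈ Icc 1 T, x t j)
      = β + (∑ t ∈ range T, ((∑ j, a j * x (t + 1) j) - β)) / T := by
  have hshift : ∑ t ∈ range T, ∑ j, a j * x (t + 1) j = ∑ t ∈ Icc 1 T, ∑ j, a j * x t j := by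
    rw [range_eq_Ico, sum_Ico_add' (fun t => ∑ j, a j * x t j), zero_add,
      Ico_add_one_right_eq_Icc]
  have hswap : ∑ j, a j * ((1 / (T : ℝ)) * ∑ t ∈ Icc 1 T, x t j)
      = (∑ t ∈ Icc 1 T, ∑ j, a j * x t j) / T := by
    rw [sum_comm, sum_div]
    simp only [mul_sum, sum_div]
    exact sum_congr rfl fun j _ => sum_congr rfl fun t _ => by ring
  rw [hswap, sum_sub_distrib, hshift, sum_const, card_range, nsmul_eq_mul]
  field_simp
  ring

/-- MWU guarantee underlying the distributed linear programming protocol (Section 6.2).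
There is an absolute constant `C > 0` so that: for hard constraints `⟨a i, x⟩ ≥ b i`
(`i ∈ Fin n`, `n ≥ 2`, points in `ℝ^d`, `d ≥ 1`), accuracy `ε ∈ (0,1]`, width `ρ ≥ 1`,
and `T ≥ C · ρ² · ln n / ε²` rounds, if the oracle responses `x 1, …, x T` satisfy
(i) `|⟨a i, x t⟩ − b i| ≤ ρ` for all `i, t`, and (ii) in every round the aggregated
constraint `∑ i, p t i · (⟨a i, x t⟩ − b i) ≥ 0` holds, where `m 0 i = 0`,
`m t i = m (t−1) i + ⟨a i, x t⟩ − b i`, and `p t i = exp(−ε · m (t−1) i / (2ρ²))`,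
then the average `x̄ = (1/T) ∑_{t=1}^T x t` satisfies `⟨a i, x̄⟩ ≥ b i − ε` for all `i`. -/
theorem mwu_lp_soft_approximation :
    ∃ C : ℝ, 0 < C ∧
      ∀ (n d : ℕ), 2 ≤ n → 1 ≤ d →
      ∀ (a : Fin n → Fin d → ℝ) (b : Fin n → ℝ)
        (ε ρ : ℝ), 0 < ε → ε ≤ 1 → 1 ≤ ρ →
      ∀ (T : ℕ), (T : ℝ) ≥ C * ρ ^ 2 * Real.log n / ε ^ 2 →
      ∀ (x : ℕ → Fin d → ℝ) (m : ℕ → Fin n → ℝ) (p : ℕ → Fin n → ℝ),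
        (∀ i, m 0 i = 0) →
        (∀ t, 1 ≤ t → t ≤ T → ∀ i,
          m t i = m (t - 1) i + ((∑ j, a i j * x t j) - b i)) →
        (∀ t, 1 ≤ t → t ≤ T → ∀ i,
          p t i = Real.exp (-ε * m (t - 1) i / (2 * ρ ^ 2))) →
        (∀ i, ∀ t, 1 ≤ t → t ≤ T →
          |(∑ j, a i j * x t j) - b i| ≤ ρ) →
        (∀ t, 1 ≤ t → t ≤ T →
          0 ≤ ∑ i, p t i * ((∑ j, a i j * x t j) - b i)) →
        ∀ i, (∑ j, a i j * ((1 / (T : ℝ)) * ∑ t ∈ Finset.Icc 1 T, x t j))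
          ≥ b i - ε := by
  refine ⟨4, by norm_num,
    fun n d hn _ a b ε ρ hε hε1 hρ T hT x m p hm0 hmrec hp hwidth hagg i => ?_⟩
  set η := ε / (2 * ρ ^ 2) with hη_def
  set g : ℕ → Fin n → ℝ := fun t i => (∑ j, a i j * x (t + 1) j) - b i
  have hρ2 : 1 ≤ ρ ^ 2 := one_le_pow₀ hρ
  have hη : 0 < η := by positivity
  have hηρ : η * ρ ≤ 1 := by
    rw [hη_def, div_mul_eq_mul_div, div_le_one (by positivity)]; nlinarith
  have hm : ∀ t < T, ∀ i, m (t + 1) i = m t i + g t i := fun t ht =>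
    hmrec (t + 1) le_add_self ht
  have hmg : ∀ t < T, 0 ≤ ∑ i, exp (-η * m t i) * g t i := fun t ht => by
    convert hagg (t + 1) le_add_self ht using 3 with i
    rw [hp (t + 1) le_add_self ht, Nat.add_sub_cancel, hη_def]; ring_nf
  have hregret := neg_le_log_card_div_add hη hηρ hm0 hm
    (fun t ht i => hwidth i (t + 1) le_add_self ht) hmg i
  have hlogn : 0 < log n := log_pos (by exact_mod_cast hn)
  have hT0 : (0 : ℝ) < T := lt_of_lt_of_le (by positivity) hT
  -- Both terms of the regret bound are at most `εT/2`: this is what `C = 4` is for.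
  have hlog_le : log n / η ≤ ε * T / 2 := by
    rw [ge_iff_le, div_le_iff₀ (by positivity)] at hT
    rw [hη_def, div_div_eq_mul_div, div_le_iff₀ hε]; nlinarith
  rw [Fintype.card_fin, show η * ρ ^ 2 * T = ε * T / 2 by rw [hη_def]; field_simp] at hregret
  rw [sum_mul_average_eq_add_div (a i) (b i) x (Nat.cast_pos.mp hT0).ne',
    ← eq_sum_range_of_succ hm0 hm, ge_iff_le]
  have hslack : -ε ≤ m T i / T := by rw [le_div_iff₀ hT0]; linarith
  linarith
end
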